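/- Let I be a PPN-3-SAT instance with clauses C₁,…,C_m (2-clauses C₁,…,C_{m₂} and 3-clauses C_{m₂+1},…,C_m), and construct the HRRCDR instance I' as follows (hospital capacities are 1 unless stated; notation: for variable x_i, its k-th positive occurrence (k=1,2) is the ℓ_{i,k}-th literal of clause C_{j_{i,k}} and its negative occurrence is the ℓ_{i,3}-th literal of C_{j_{i,3}}; for clause C_j whose ℓ-th literal is of variable x_{i_{j,ℓ}}, k_{j,ℓ} ∈ {1,2,3} indicates which of those three occurrences it is). Variable gadget for x_i: residents e'_{i,1}: (b'_{i,1}, x'_{i,3}) and e'_{i,2}: (b'_{i,2}, x'_{i,3}); hospitals b'_{i,1}: (e'_{i,1}), x'_{i,1}: (c'_{j_{i,1},ℓ_{i,1}}), b'_{i,2}: (e'_{i,2}), x'_{i,2}: (c'_{j_{i,2},ℓ_{i,2}}), and x'_{i,3} of capacity 2 with list (e'_{i,1}, e'_{i,2}, c'_{j_{i,3},ℓ_{i,3}}); regions {b'_{i,1}, x'_{i,1}} with cap 1 and {b'_{i,2}, x'_{i,2}} with cap 1. Clause gadget for a 2-clause C_j: residents c'_{j,1}: (x'_{i_{j,1},k_{j,1}},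 a'_{j,1}) and c'_{j,2}: (x'_{i_{j,2},k_{j,2}}, a'_{j,1}); hospitals a'_{j,1}: (c'_{j,1}, c'_{j,2}) and y'_j: (z'_j); region {a'_{j,1}, y'_j} with cap 1. Clause gadget for a 3-clause C_j: residents c'_{j,1}: (x'_{i_{j,1},k_{j,1}}, a'_{j,1}), c'_{j,2}: (x'_{i_{j,2},k_{j,2}}, a'_{j,1}), d'_j: (a'_{j,2}, a'_{j,3}), c'_{j,3}: (x'_{i_{j,3},k_{j,3}}, a'_{j,3}); hospitals a'_{j,1}: (c'_{j,1}, c'_{j,2}), a'_{j,2}: (d'_j), a'_{j,3}: (d'_j, c'_{j,3}), y'_j: (z'_j); regions {a'_{j,1}, a'_{j,2}} with cap 1 and {a'_{j,3}, y'_j} with cap 1. Terminal gadget for each clause C_j: residents g'_{j,1}: (g'_{j,2}, g'_{j,4}), g'_{j,3}: (g'_{j,4}, g'_{j,2}), z'_j: (y'_j, g'_{j,2}); hospitals g'_{j,2}: (z'_j, g'_{j,3}, g'_{j,1}) and g'_{j,4}: (g'_{j,1}, g'_{j,3}); region {g'_{j,2}, g'_{j,4}} with cap 1. Then I' admits a strongly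 stable matching if and only if I is satisfiable. (Note that in I' every resident's list has length ≤ 2, every hospital's list has length ≤ 3, every region has size ≤ 2, and regions are pairwise disjoint.) -/

import Mathlib

/-- `a` is strictly preferred to `b` in the strictly ordered preference list `l`
(most preferred first). -/
def ListPref {α : Type*} [DecidableEq α] (l : List α) (a b : α) : Prop :=
  b ∈ l ∧ l.idxOf a < l.idxOf b

/-- An instance of the Hospitals/Residents problem with Regional Caps (HRRC):
residents `R`, hospitals `H`, strict preference lists on both sides,
hospital capacities `q`, a family `regions` of regions with regional caps `cap`. -/
structure HRRC (R H : Type*) where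
  prefR : R → List H
  prefH : H → List R
  q : H → ℕ
  regions : Set (Finset H)
  cap : Finset H → ℕ

namespace HRRC

variable {R H : Type*} [DecidableEq R] [DecidableEq H]

/-- Well-formedness: preference lists are strict (no repetitions), acceptability is
mutual, and regions are nonempty. -/
def WellFormed (I : HRRC R H) : Prop :=
  (∀ r, (I.prefR r).Nodup) ∧ (∀ h, (I.prefH h).Nodup) ∧
  (∀ r h, h ∈ I.prefR r ↔ r ∈ I.prefH h) ∧
  (∀ E ∈ I.regions, E.Nonempty)

/-- `M(h)`: the set of residents assigned to hospital `h`. -/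
def assignedTo (M : Finset (R × H)) (h : H) : Finset R :=
  (M.filter fun p => p.2 = h).image Prod.fst

/-- `M(E)`: the set of residents assigned to some hospital in the region `E`. -/
def assignedIn (M : Finset (R × H)) (E : Finset H) : Finset R :=
  (M.filter fun p => p.2 ∈ E).image Prod.fst

/-- `M` is a matching: pairs are mutually acceptable, each resident has at most one
hospital, and no hospital exceeds its capacity. -/
def IsMatching (I : HRRC R H) (M : Finset (R × H)) : Prop :=
  (∀ p ∈ M, p.2 ∈ I.prefR p.1 ∧ p.1 ∈ I.prefH p.2) ∧
  (∀ r h h', (r, h) ∈ M → (r, h') ∈ M → h = h') ∧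
  (∀ h, (assignedTo M h).card ≤ I.q h)

/-- Feasibility: all regional caps are respected. -/
def FeasibleCaps (I : HRRC R H) (M : Finset (R × H)) : Prop :=
  ∀ E ∈ I.regions, (assignedIn M E).card ≤ I.cap E

/-- `M \ {(r, M(r))} ∪ {(r, h)}`. -/
def move (M : Finset (R × H)) (r : R) (h : H) : Finset (R × H) :=
  (M.filter fun p => p.1 ≠ r) ∪ {(r, h)}

/-- `(r, h)` is a blocking pair for `M`. -/
def IsBlockingPair (I : HRRC R H) (M : Finset (R × H)) (r : R) (h : H) : Prop :=
  (r, h) ∉ M ∧ (h ∈ I.prefR r ∧ r ∈ I.prefH h) ∧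
  ((∀ h', (r, h') ∉ M) ∨ ∃ h', (r, h') ∈ M ∧ ListPref (I.prefR r) h h') ∧
  ((assignedTo M h).card < I.q h ∨ ∃ r' ∈ assignedTo M h, ListPref (I.prefH h) r r')

/-- `(r, h)` is a strong blocking pair for `M`. -/
def IsSBP (I : HRRC R H) (M : Finset (R × H)) (r : R) (h : H) : Prop :=
  I.IsBlockingPair M r h ∧
  (I.FeasibleCaps (move M r h) ∨ ∃ r' ∈ assignedTo M h, ListPref (I.prefH h) r r')

/-- `M` is a strongly stable matching of `I`. -/
def IsStronglyStable (I : HRRC R H) (M : Finset (R × H)) : Prop :=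
  I.IsMatching M ∧ I.FeasibleCaps M ∧ ∀ r h, ¬ I.IsSBP M r h

end HRRC

/- A PPN-3-SAT instance with `n` variables and `m` clauses is encoded as follows:
clauses `j` with `(j : ℕ) < m₂` are 2-clauses, the others are 3-clauses (so clause
`j` has length `if (j : ℕ) < m₂ then 2 else 3`, and its valid literal positions are
the `l : Fin 3` below that length); `v j l` is the variable of the `l`-th literal of
clause `j` and `pol j l` its polarity; `occ i k = (j_{i,k}, ℓ_{i,k})` is the position
of the `k`-th occurrence of variable `i` (`k = 0, 1` its two positive occurrences,
`k = 2` its negative occurrence); `kIdx j l = k_{j,l}` tells which occurrence of its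
variable the `l`-th literal of clause `j` is. -/

/-- Residents of `I'`: `e'_{i,1}, e'_{i,2}` (here `e i 0, e i 1`);
`c'_{j,1}, c'_{j,2}, c'_{j,3}` (here `c j 0, c j 1, c j 2`; `c j 2` is unused for a
2-clause `j` and gets an empty list); `d'_j` (unused for 2-clauses);
`g'_{j,1}, g'_{j,3}, z'_j`. -/
inductive Res12 (n m : ℕ) where
  | e (i : Fin n) (t : Fin 2)
  | c (j : Fin m) (l : Fin 3)
  | d (j : Fin m)
  | g1 (j : Fin m)
  | g3 (j : Fin m)
  | z (j : Fin m)
deriving DecidableEq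

/-- Hospitals of `I'`: `b'_{i,1}, b'_{i,2}` (here `b i 0, b i 1`);
`x'_{i,1}, x'_{i,2}, x'_{i,3}` (here `x i 0, x i 1, x i 2`);
`a'_{j,1}, a'_{j,2}, a'_{j,3}` (here `a j 0, a j 1, a j 2`; the latter two are unused
for 2-clauses); `y'_j`; `g'_{j,2}, g'_{j,4}`. -/
inductive Hos12 (n m : ℕ) where
  | b (i : Fin n) (t : Fin 2)
  | x (i : Fin n) (k : Fin 3)
  | a (j : Fin m) (t : Fin 3)
  | y (j : Fin m)
  | g2 (j : Fin m)
  | g4 (j : Fin m)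
deriving DecidableEq

/-- Resident preference lists of `I'`:
`e'_{i,1}: (b'_{i,1}, x'_{i,3})`, `e'_{i,2}: (b'_{i,2}, x'_{i,3})`,
`c'_{j,1}: (x'_{i_{j,1},k_{j,1}}, a'_{j,1})`, `c'_{j,2}: (x'_{i_{j,2},k_{j,2}}, a'_{j,1})`,
`c'_{j,3}: (x'_{i_{j,3},k_{j,3}}, a'_{j,3})` (3-clauses only),
`d'_j: (a'_{j,2}, a'_{j,3})` (3-clauses only),
`g'_{j,1}: (g'_{j,2}, g'_{j,4})`, `g'_{j,3}: (g'_{j,4}, g'_{j,2})`,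
`z'_j: (y'_j, g'_{j,2})`. -/
def prefRes12 {n m : ℕ} (m₂ : ℕ) (v : Fin m → Fin 3 → Fin n)
    (kIdx : Fin m → Fin 3 → Fin 3) : Res12 n m → List (Hos12 n m)
  | .e i t => if (t : ℕ) = 0 then [.b i 0, .x i 2] else [.b i 1, .x i 2]
  | .c j l =>
      if (l : ℕ) < 2 then [.x (v j l) (kIdx j l), .a j 0]
      else if (j : ℕ) < m₂ then []
      else [.x (v j l) (kIdx j l), .a j 2]
  | .d j => if (j : ℕ) < m₂ then [] else [.a j 1, .a j 2]
  | .g1 j => [.g2 j, .g4 j]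
  | .g3 j => [.g4 j, .g2 j]
  | .z j => [.y j, .g2 j]

/-- Hospital preference lists of `I'`:
`b'_{i,1}: (e'_{i,1})`, `b'_{i,2}: (e'_{i,2})`,
`x'_{i,1}: (c'_{j_{i,1},ℓ_{i,1}})`, `x'_{i,2}: (c'_{j_{i,2},ℓ_{i,2}})`,
`x'_{i,3}: (e'_{i,1}, e'_{i,2}, c'_{j_{i,3},ℓ_{i,3}})`,
`a'_{j,1}: (c'_{j,1}, c'_{j,2})`, `a'_{j,2}: (d'_j)` and `a'_{j,3}: (d'_j, c'_{j,3})`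
(3-clauses only), `y'_j: (z'_j)`, `g'_{j,2}: (z'_j, g'_{j,3}, g'_{j,1})`,
`g'_{j,4}: (g'_{j,1}, g'_{j,3})`. -/
def prefHos12 {n m : ℕ} (m₂ : ℕ) (occ : Fin n → Fin 3 → Fin m × Fin 3) :
    Hos12 n m → List (Res12 n m)
  | .b i t => if (t : ℕ) = 0 then [.e i 0] else [.e i 1]
  | .x i k =>
      if (k : ℕ) < 2 then [.c (occ i k).1 (occ i k).2]
      else [.e i 0, .e i 1, .c (occ i k).1 (occ i k).2]
  | .a j t =>
      if (t : ℕ) = 0 then [.c j 0, .c j 1]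
      else if (j : ℕ) < m₂ then []
      else if (t : ℕ) = 1 then [.d j]
      else [.d j, .c j 2]
  | .y j => [.z j]
  | .g2 j => [.z j, .g3 j, .g1 j]
  | .g4 j => [.g1 j, .g3 j]

/-- Regions of `I'`: for each variable `i`, `{b'_{i,1}, x'_{i,1}}` and
`{b'_{i,2}, x'_{i,2}}`; for each 2-clause `j`, `{a'_{j,1}, y'_j}`; for each
3-clause `j`, `{a'_{j,1}, a'_{j,2}}` and `{a'_{j,3}, y'_j}`; for each clause `j`,
`{g'_{j,2}, g'_{j,4}}`.  All regional caps are 1. -/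
def regions12 {n m : ℕ} (m₂ : ℕ) : Set (Finset (Hos12 n m)) :=
  { E | (∃ i : Fin n,
      E = {Hos12.b i 0, Hos12.x i 0} ∨ E = {Hos12.b i 1, Hos12.x i 1}) ∨
    (∃ j : Fin m,
      ((j : ℕ) < m₂ ∧ E = {Hos12.a j 0, Hos12.y j}) ∨
      (¬ (j : ℕ) < m₂ ∧
        (E = {Hos12.a j 0, Hos12.a j 1} ∨ E = {Hos12.a j 2, Hos12.y j})) ∨
      E = {Hos12.g2 j, Hos12.g4 j}) }

/-- The HRRCDR instance `I'` built from a PPN-3-SAT instance: hospital `x'_{i,3}`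
has capacity 2, all other hospitals have capacity 1, and all regional caps are 1. -/
def ppnInstance232 {n m : ℕ} (m₂ : ℕ) (v : Fin m → Fin 3 → Fin n)
    (occ : Fin n → Fin 3 → Fin m × Fin 3) (kIdx : Fin m → Fin 3 → Fin 3) :
    HRRC (Res12 n m) (Hos12 n m) where
  prefR := prefRes12 m₂ v kIdx
  prefH := prefHos12 m₂ occ
  q := fun h => match h with
    | .x _ k => if (k : ℕ) = 2 then 2 else 1
    | _ => 1
  regions := regions12 m₂
  cap := fun _ => 1

/-! A satisfying assignment `σ` yields a strongly stable matching: `e'_{i,·}` sit at `b'_{i,·}`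
if `σ(x_i)` holds and at `x'_{i,3}` otherwise, the `c'` of a false literal sits at its occurrence
hospital, each clause sends one true literal to the `a'`-hospital sharing a region with `y'_j`
(with `d'_j` filling the remaining `a'`-hospital), and `z'_j` sits at `g'_{j,2}`. Every remaining
blocking pair is weak: either the hospital is full of residents it prefers, or its region is held
by someone else.

Conversely, the terminal gadget `g'_{j,1..4}` admits no strongly stable matching by itself, so
`z'_j` is at `g'_{j,2}`. The blocking pair `(z'_j, y'_j)` is then weak only if the other hospital of
the region of `y'_j` is occupied, which (possibly via `d'_j`) puts some `c'_{j,l}` on its clause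
hospital. That `c'_{j,l}` blocks with its occurrence hospital `x'_{i,k}`: for a positive occurrence
this pair is weak only if `e'_{i,k}` holds `b'_{i,k}`, for the negative one only if `x'_{i,3}` is
full with `e'_{i,1}, e'_{i,2}`. Setting `x_i` true iff some `e'_{i,t}` is at `b'_{i,t}` makes the
literal of `c'_{j,l}` true. -/

theorem ListPref.irrefl {α : Type*} [DecidableEq α] (l : List α) (a : α) : ¬ ListPref l a a :=
  fun h => lt_irrefl _ h.2

namespace HRRC

section Assignment

variable {R H : Type*} [DecidableEq R] [DecidableEq H] {I : HRRC R H}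
  {M : Finset (R × H)} {r r' r₁ r₂ : R} {h h₀ h₁ h₂ : H} {E : Finset H}

@[simp]
lemma mem_assignedTo : r ∈ assignedTo M h ↔ (r, h) ∈ M := by
  simp [assignedTo]

@[simp]
lemma mem_assignedIn : r ∈ assignedIn M E ↔ ∃ h ∈ E, (r, h) ∈ M := by
  simp [assignedIn, and_comm]

lemma assignedIn_pair : assignedIn M {h₁, h₂} = assignedTo M h₁ ∪ assignedTo M h₂ := by
  ext
  simp [or_and_right, exists_or]

lemma assignedIn_move :
    assignedIn (move M r h) E =
      if h ∈ E then insert r ((assignedIn M E).erase r) else (assignedIn M E).erase r := by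
  ext r''
  split_ifs <;> simp [move] <;> grind

lemma card_assignedTo_lt_of_vacant (hvac : ∀ r, (r, h) ∉ M) (hq : 0 < I.q h) :
    (assignedTo M h).card < I.q h := by
  rwa [Finset.card_eq_zero.2 (Finset.eq_empty_of_forall_notMem fun r hr =>
    hvac r (by simpa using hr))]

lemma card_assignedIn_pair_le_one (h₁_le : (assignedTo M h₁).card ≤ 1)
    (h₂_le : (assignedTo M h₂).card ≤ 1) (hvac : (∀ r, (r, h₁) ∉ M) ∨ ∀ r, (r, h₂) ∉ M) :
    (assignedIn M {h₁, h₂}).card ≤ 1 := by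
  rw [assignedIn_pair]
  rcases hvac with hvac | hvac
  · rwa [Finset.eq_empty_of_forall_notMem (s := assignedTo M h₁) (by simpa using hvac),
      Finset.empty_union]
  · rwa [Finset.eq_empty_of_forall_notMem (s := assignedTo M h₂) (by simpa using hvac),
      Finset.union_empty]

lemma IsMatching.mem_prefR (hM : I.IsMatching M) (hr : (r, h) ∈ M) : h ∈ I.prefR r :=
  (hM.1 _ hr).1

lemma IsMatching.eq_of_mem (hM : I.IsMatching M) (hr₁ : (r, h₁) ∈ M) (hr₂ : (r, h₂) ∈ M) :
    h₁ = h₂ :=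
  hM.2.1 r h₁ h₂ hr₁ hr₂

lemma IsMatching.mem_prefH (hM : I.IsMatching M) (hr : (r, h) ∈ M) : r ∈ I.prefH h :=
  (hM.1 _ hr).2

lemma FeasibleCaps.eq_of_mem (hF : I.FeasibleCaps M) (hE : E ∈ I.regions) (hcap : I.cap E ≤ 1)
    (hh₁ : h₁ ∈ E) (hh₂ : h₂ ∈ E) (hr₁ : (r₁, h₁) ∈ M) (hr₂ : (r₂, h₂) ∈ M) : r₁ = r₂ :=
  Finset.card_le_one.1 ((hF E hE).trans hcap) _ (mem_assignedIn.2 ⟨h₁, hh₁, hr₁⟩)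
    _ (mem_assignedIn.2 ⟨h₂, hh₂, hr₂⟩)

lemma feasibleCaps_move (hM : I.FeasibleCaps M) (hcap : ∀ E ∈ I.regions, 1 ≤ I.cap E)
    (hocc : ∀ E ∈ I.regions, h ∈ E → ∀ r' ∈ assignedIn M E, r' = r) :
    I.FeasibleCaps (move M r h) := by
  intro E hE
  rw [assignedIn_move]
  split_ifs with hhE
  · refine le_trans (Finset.card_le_one.2 ?_) (hcap E hE)
    grind
  · exact Finset.card_erase_le.trans (hM E hE)

lemma not_feasibleCaps_move_of_rival (hE : E ∈ I.regions) (hcap : I.cap E ≤ 1) (hhE : h ∈ E)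
    (hr' : r' ∈ assignedIn M E) (hne : r' ≠ r) : ¬ I.FeasibleCaps (move M r h) := fun hF => by
  have := hF E hE
  rw [assignedIn_move, if_pos hhE] at this
  have : 1 < (insert r ((assignedIn M E).erase r)).card :=
    Finset.one_lt_card.2 ⟨r, by simp, r', by simp [hne, hr'], hne.symm⟩
  omega

end Assignment

section Stability

variable {R H : Type*} [DecidableEq H] {I : HRRC R H}
  {M : Finset (R × H)} {r r' : R} {h h₀ : H} {E : Finset H}

/-- The resident's half of a blocking pair. -/
def Desires (I : HRRC R H) (M : Finset (R × H)) (r : R) (h : H) : Prop :=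
  (r, h) ∉ M ∧ (h ∈ I.prefR r ∧ r ∈ I.prefH h) ∧
    ((∀ h', (r, h') ∉ M) ∨ ∃ h', (r, h') ∈ M ∧ ListPref (I.prefR r) h h')

lemma desires_of_unassigned (hacc : h ∈ I.prefR r ∧ r ∈ I.prefH h) (hun : ∀ h', (r, h') ∉ M) :
    I.Desires M r h :=
  ⟨hun h, hacc, .inl hun⟩

variable [DecidableEq R]

lemma desires_of_listPref (hM : I.IsMatching M) (hacc : h ∈ I.prefR r ∧ r ∈ I.prefH h)
    (hr : (r, h₀) ∈ M) (hp : ListPref (I.prefR r) h h₀) : I.Desires M r h :=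
  ⟨fun hr' => ListPref.irrefl _ _ (hM.eq_of_mem hr' hr ▸ hp), hacc, .inr ⟨h₀, hr, hp⟩⟩

namespace IsStronglyStable

lemma not_listPref (hM : I.IsStronglyStable M) (hd : I.Desires M r h) (hr' : (r', h) ∈ M) :
    ¬ ListPref (I.prefH h) r r' := fun hp =>
  hM.2.2 r h ⟨⟨hd.1, hd.2.1, hd.2.2, .inr ⟨r', by simpa, hp⟩⟩, .inr ⟨r', by simpa, hp⟩⟩

lemma not_feasibleCaps_move (hM : I.IsStronglyStable M) (hd : I.Desires M r h)
    (hvac : (assignedTo M h).card < I.q h) : ¬ I.FeasibleCaps (move M r h) := fun hF =>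
  hM.2.2 r h ⟨⟨hd.1, hd.2.1, hd.2.2, .inl hvac⟩, .inl hF⟩

lemma le_card_assignedTo (hM : I.IsStronglyStable M) (hd : I.Desires M r h)
    (hF : I.FeasibleCaps (move M r h)) : I.q h ≤ (assignedTo M h).card :=
  not_lt.1 fun hvac => hM.not_feasibleCaps_move hd hvac hF

end IsStronglyStable

lemma IsSBP.mem_prefR (hs : I.IsSBP M r h) : h ∈ I.prefR r :=
  hs.1.2.1.1

lemma not_isSBP_of_mem (hr : (r, h) ∈ M) : ¬ I.IsSBP M r h :=
  fun hs => hs.1.1 hr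

lemma not_isSBP_of_assigned (hM : I.IsMatching M) (hr : (r, h₀) ∈ M)
    (hpref : ¬ ListPref (I.prefR r) h h₀) : ¬ I.IsSBP M r h := by
  rintro ⟨⟨-, -, hun | ⟨h', hr', hp⟩, -⟩, -⟩
  · exact hun h₀ hr
  · exact hpref (hM.eq_of_mem hr' hr ▸ hp)

lemma not_isSBP_of_full (hfull : I.q h ≤ (assignedTo M h).card)
    (hnw : ∀ r' ∈ assignedTo M h, ¬ ListPref (I.prefH h) r r') : ¬ I.IsSBP M r h := by
  rintro ⟨⟨-, -, -, hvac | ⟨r', hr', hp⟩⟩, -⟩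
  · exact hfull.not_gt hvac
  · exact hnw r' hr' hp

lemma not_isSBP_of_rival (hE : E ∈ I.regions) (hcap : I.cap E ≤ 1) (hhE : h ∈ E)
    (hr' : r' ∈ assignedIn M E) (hne : r' ≠ r)
    (hnw : ∀ r' ∈ assignedTo M h, ¬ ListPref (I.prefH h) r r') : ¬ I.IsSBP M r h := by
  rintro ⟨-, hF | ⟨r'', hr'', hp⟩⟩
  · exact not_feasibleCaps_move_of_rival hE hcap hhE hr' hne hF
  · exact hnw r'' hr'' hp

end Stability

end HRRC

namespace PPNReduction

open HRRC

variable {n m m₂ : ℕ} {v : Fin m → Fin 3 → Fin n} {pol : Fin m → Fin 3 → Bool}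
  {occ : Fin n → Fin 3 → Fin m × Fin 3} {kIdx : Fin m → Fin 3 → Fin 3}
  {i : Fin n} {j : Fin m} {k l : Fin 3} {t : Fin 2} {E : Finset (Hos12 n m)}
  {σ : Fin n → Bool} {r : Res12 n m} {h : Hos12 n m}

section Encoding

def IsLitPos (m₂ : ℕ) (j : Fin m) (l : Fin 3) : Prop :=
  (l : ℕ) < if (j : ℕ) < m₂ then 2 else 3

instance (m₂ : ℕ) (j : Fin m) (l : Fin 3) : Decidable (IsLitPos m₂ j l) := by
  unfold IsLitPos
  infer_instance

lemma isLitPos_iff : IsLitPos m₂ j l ↔ (l : ℕ) < 2 ∨ l = 2 ∧ ¬ (j : ℕ) < m₂ := by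
  unfold IsLitPos
  split_ifs <;> omega

structure Consistent (m₂ : ℕ) (v : Fin m → Fin 3 → Fin n) (pol : Fin m → Fin 3 → Bool)
    (occ : Fin n → Fin 3 → Fin m × Fin 3) (kIdx : Fin m → Fin 3 → Fin 3) : Prop where
  occ_isLitPos : ∀ i k, IsLitPos m₂ (occ i k).1 (occ i k).2
  v_occ : ∀ i k, v (occ i k).1 (occ i k).2 = i
  pol_occ : ∀ i k, pol (occ i k).1 (occ i k).2 = decide ((k : ℕ) < 2)
  occ_injective : ∀ i, Function.Injective (occ i)
  occ_kIdx : ∀ j l, IsLitPos m₂ j l → occ (v j l) (kIdx j l) = (j, l)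

def litVal (v : Fin m → Fin 3 → Fin n) (pol : Fin m → Fin 3 → Bool) (σ : Fin n → Bool)
    (j : Fin m) (l : Fin 3) : Bool :=
  if pol j l then σ (v j l) else !σ (v j l)

variable (m₂ v pol) in
def Satisfies (σ : Fin n → Bool) : Prop :=
  ∀ j, ∃ l, IsLitPos m₂ j l ∧ litVal v pol σ j l = true

namespace Consistent

lemma kIdx_occ (hc : Consistent m₂ v pol occ kIdx) (i : Fin n) (k : Fin 3) :
    kIdx (occ i k).1 (occ i k).2 = k :=
  hc.occ_injective i (by simpa [hc.v_occ] using hc.occ_kIdx _ _ (hc.occ_isLitPos i k))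

lemma litVal_occ (hc : Consistent m₂ v pol occ kIdx) (σ : Fin n → Bool) (i : Fin n) (k : Fin 3) :
    litVal v pol σ (occ i k).1 (occ i k).2 = if (k : ℕ) < 2 then σ i else !σ i := by
  simp only [litVal, hc.pol_occ, hc.v_occ]
  split_ifs <;> simp_all

lemma litVal_eq (hc : Consistent m₂ v pol occ kIdx) (σ : Fin n → Bool) (hl : IsLitPos m₂ j l) :
    litVal v pol σ j l = if (kIdx j l : ℕ) < 2 then σ (v j l) else !σ (v j l) := by
  simpa [hc.occ_kIdx j l hl] using hc.litVal_occ σ (v j l) (kIdx j l)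

end Consistent

end Encoding

section Instance

local notation "I'" => ppnInstance232 m₂ v occ kIdx

def clauseHos (j : Fin m) (l : Fin 3) : Hos12 n m := .a j (if (l : ℕ) < 2 then 0 else 2)

@[simp]
lemma prefR_ppnInstance232 : (I').prefR = prefRes12 m₂ v kIdx := rfl

@[simp]
lemma prefH_ppnInstance232 : (I').prefH = prefHos12 m₂ occ := rfl

lemma q_eq_one (hh : ∀ i, h ≠ .x i 2) : q I' h = 1 := by
  cases h with
  | x i k => exact if_neg fun hk => hh i (by rw [show k = 2 from Fin.ext hk])
  | _ => rfl

@[simp]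
lemma q_x_two : q I' (.x i 2) = 2 := rfl

lemma q_pos : 0 < q I' h := by
  cases h with
  | x i k => simp only [ppnInstance232]; split_ifs <;> norm_num
  | _ => exact Nat.one_pos

@[simp]
lemma prefRes12_e : prefRes12 m₂ v kIdx (.e i t) = [.b i t, .x i 2] := by
  fin_cases t <;> rfl

lemma prefRes12_c (hl : IsLitPos m₂ j l) :
    prefRes12 m₂ v kIdx (.c j l) = [.x (v j l) (kIdx j l), clauseHos j l] := by
  rw [isLitPos_iff] at hl
  rcases hl with hl | ⟨rfl, hj⟩ <;> simp_all [prefRes12, clauseHos]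

lemma isLitPos_of_mem_prefRes12 (hh : h ∈ prefRes12 m₂ v kIdx (.c j l)) : IsLitPos m₂ j l := by
  by_contra hl
  simp only [isLitPos_iff, not_or, not_and, not_not] at hl
  have : (l : ℕ) = 2 := by omega
  simp [prefRes12, this, hl.2 (Fin.ext this)] at hh

lemma prefRes12_d (hj : ¬ (j : ℕ) < m₂) : prefRes12 m₂ v kIdx (.d j) = [.a j 1, .a j 2] := by
  simp [prefRes12, hj]

@[simp]
lemma prefHos12_b : prefHos12 m₂ occ (.b i t) = [.e i t] := by
  fin_cases t <;> rfl

lemma prefHos12_x_of_lt (hk : (k : ℕ) < 2) :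
    prefHos12 m₂ occ (.x i k) = [.c (occ i k).1 (occ i k).2] := by
  simp [prefHos12, hk]

@[simp]
lemma prefHos12_x_two :
    prefHos12 m₂ occ (.x i 2) = [.e i 0, .e i 1, .c (occ i 2).1 (occ i 2).2] := rfl

lemma c_mem_prefHos12_x (hc : Consistent m₂ v pol occ kIdx) (hl : IsLitPos m₂ j l) :
    .c j l ∈ prefHos12 m₂ occ (.x (v j l) (kIdx j l)) := by
  simp only [prefHos12]
  split_ifs <;> simp [hc.occ_kIdx j l hl]

@[simp]
lemma prefHos12_a_zero : prefHos12 m₂ occ (.a j 0) = [.c j 0, .c j 1] := rfl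

lemma prefHos12_a_one (hj : ¬ (j : ℕ) < m₂) : prefHos12 m₂ occ (.a j 1) = [.d j] := by
  simp [prefHos12, hj]

lemma prefHos12_a_two (hj : ¬ (j : ℕ) < m₂) :
    prefHos12 m₂ occ (.a j 2) = [.d j, .c j 2] := by
  simp [prefHos12, hj]

lemma b_x_mem_regions12 (i : Fin n) (t : Fin 2) :
    ({.b i t, .x i t.castSucc} : Finset (Hos12 n m)) ∈ regions12 m₂ := by
  fin_cases t
  exacts [.inl ⟨i, .inl rfl⟩, .inl ⟨i, .inr rfl⟩]

lemma g_mem_regions12 : ({.g2 j, .g4 j} : Finset (Hos12 n m)) ∈ regions12 m₂ :=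
  .inr ⟨j, .inr (.inr rfl)⟩

lemma eq_of_x_mem_regions12 (hk : (k : ℕ) < 2) (hE : E ∈ regions12 m₂) (hx : .x i k ∈ E) :
    E = {.b i ⟨k, hk⟩, .x i k} := by
  rcases hE with ⟨i', rfl | rfl⟩ | ⟨j', ⟨-, rfl⟩ | ⟨-, rfl | rfl⟩ | rfl⟩ <;> simp at hx <;>
    obtain ⟨rfl, rfl⟩ := hx <;> rfl

lemma x_two_not_mem_regions12 (hE : E ∈ regions12 m₂) : .x i 2 ∉ E := by
  rcases hE with ⟨i', rfl | rfl⟩ | ⟨j', ⟨-, rfl⟩ | ⟨-, rfl | rfl⟩ | rfl⟩ <;> simp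

lemma eq_of_a_one_mem_regions12 (hE : E ∈ regions12 m₂) (ha : .a j 1 ∈ E) :
    E = {.a j 0, .a j 1} := by
  rcases hE with ⟨i', rfl | rfl⟩ | ⟨j', ⟨-, rfl⟩ | ⟨-, rfl | rfl⟩ | rfl⟩ <;> simp_all

lemma eq_of_y_mem_regions12 (hE : E ∈ regions12 m₂) (hy : .y j ∈ E) :
    E = {.a j (if (j : ℕ) < m₂ then 0 else 2), .y j} := by
  rcases hE with ⟨i', rfl | rfl⟩ | ⟨j', ⟨hj, rfl⟩ | ⟨hj, rfl | rfl⟩ | rfl⟩ <;>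
    simp at hy <;> subst hy <;> simp [hj]

lemma eq_of_g_mem_regions12 (hE : E ∈ regions12 m₂) (hg : .g2 j ∈ E ∨ .g4 j ∈ E) :
    E = {.g2 j, .g4 j} := by
  rcases hE with ⟨i', rfl | rfl⟩ | ⟨j', ⟨-, rfl⟩ | ⟨-, rfl | rfl⟩ | rfl⟩ <;> simp_all

lemma not_isSBP_of_rival_of_vacant {M : Finset (Res12 n m × Hos12 n m)} {r' : Res12 n m}
    {h' : Hos12 n m} (hE : E ∈ regions12 m₂) (hhE : h ∈ E) (hh'E : h' ∈ E)
    (hr' : (r', h') ∈ M) (hne : r' ≠ r) (hvac : ∀ r'', (r'', h) ∉ M) : ¬ IsSBP I' M r h :=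
  not_isSBP_of_rival hE le_rfl hhE (mem_assignedIn.2 ⟨h', hh'E, hr'⟩) hne
    fun r'' hr'' => (hvac r'' (mem_assignedTo.1 hr'')).elim

end Instance

section Backward

local notation "I'" => ppnInstance232 m₂ v occ kIdx

/-- The `c` of a false literal takes its occurrence hospital. If the third literal of a
3-clause is true, `c j 2` takes `a j 2` and `d j` takes `a j 1`; otherwise `d j` takes `a j 2`
and the first true literal among `c j 0, c j 1` takes `a j 0`. -/
def assign (m₂ : ℕ) (v : Fin m → Fin 3 → Fin n) (pol : Fin m → Fin 3 → Bool)
    (kIdx : Fin m → Fin 3 → Fin 3) (σ : Fin n → Bool) : Res12 n m → Option (Hos12 n m)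
  | .e i t => some (if σ i then .b i t else .x i 2)
  | .c j l =>
      if IsLitPos m₂ j l then
        if litVal v pol σ j l then
          if (l : ℕ) < 2 then
            if ((j : ℕ) < m₂ ∨ litVal v pol σ j 2 = false) ∧
                ((l : ℕ) = 0 ∨ litVal v pol σ j 0 = false)
            then some (.a j 0) else none
          else some (.a j 2)
        else some (.x (v j l) (kIdx j l))
      else none
  | .d j => if (j : ℕ) < m₂ then none
      else some (if litVal v pol σ j 2 then .a j 1 else .a j 2)
  | .z j => some (.g2 j)
  | _ => none

deriving instance Fintype for Res12

def matchingOf (m₂ : ℕ) (v : Fin m → Fin 3 → Fin n) (pol : Fin m → Fin 3 → Bool)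
    (kIdx : Fin m → Fin 3 → Fin 3) (σ : Fin n → Bool) : Finset (Res12 n m × Hos12 n m) :=
  Finset.univ.biUnion fun r => (assign m₂ v pol kIdx σ r).toFinset.image (Prod.mk r)

local notation "M*" => matchingOf m₂ v pol kIdx σ

@[simp]
lemma mem_matchingOf : (r, h) ∈ M* ↔ assign m₂ v pol kIdx σ r = some h := by
  simp [matchingOf]

lemma mem_matchingOf_b (hm : (r, .b i t) ∈ M*) : r = .e i t ∧ σ i = true := by
  rw [mem_matchingOf] at hm
  cases r <;> simp only [assign] at hm <;> (try split_ifs at hm) <;> simp_all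

lemma mem_matchingOf_x (hc : Consistent m₂ v pol occ kIdx) (hm : (r, .x i k) ∈ M*) :
    (r = .c (occ i k).1 (occ i k).2 ∧ litVal v pol σ (occ i k).1 (occ i k).2 = false) ∨
      (k = 2 ∧ σ i = false ∧ (r = .e i 0 ∨ r = .e i 1)) := by
  rw [mem_matchingOf] at hm
  cases r with
  | e i' t => simp only [assign] at hm; split_ifs at hm <;> simp_all; omega
  | c j l =>
    simp only [assign] at hm
    split_ifs at hm with hl <;> simp only [Option.some.injEq, reduceCtorEq, Hos12.x.injEq] at hm
    obtain ⟨rfl, rfl⟩ := hm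
    simp_all [hc.occ_kIdx j l hl]
  | _ => simp only [assign] at hm; (try split_ifs at hm) <;> simp_all

lemma mem_matchingOf_a_zero (hm : (r, .a j 0) ∈ M*) :
    r = .c j (if litVal v pol σ j 0 then 0 else 1) ∧
      ((j : ℕ) < m₂ ∨ litVal v pol σ j 2 = false) ∧
      (litVal v pol σ j 0 = true ∨ litVal v pol σ j 1 = true) := by
  rw [mem_matchingOf] at hm
  cases r <;> simp only [assign] at hm <;> (try split_ifs at hm) <;> simp_all
  grind

lemma mem_matchingOf_a_one (hm : (r, .a j 1) ∈ M*) :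
    r = .d j ∧ ¬ (j : ℕ) < m₂ ∧ litVal v pol σ j 2 = true := by
  rw [mem_matchingOf] at hm
  cases r <;> simp only [assign] at hm <;> (try split_ifs at hm) <;> simp_all

lemma mem_matchingOf_a_two (hm : (r, .a j 2) ∈ M*) :
    ¬ (j : ℕ) < m₂ ∧ ((r = .c j 2 ∧ litVal v pol σ j 2 = true) ∨
      (r = .d j ∧ litVal v pol σ j 2 = false)) := by
  rw [mem_matchingOf] at hm
  cases r <;> simp only [assign] at hm <;> (try split_ifs at hm) <;> simp_all [isLitPos_iff]

lemma not_mem_matchingOf_y : (r, .y j) ∉ M* := by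
  rw [mem_matchingOf]
  cases r <;> simp only [assign] <;> (try split_ifs) <;> simp_all

lemma mem_matchingOf_g2 (hm : (r, .g2 j) ∈ M*) : r = .z j := by
  rw [mem_matchingOf] at hm
  cases r <;> simp only [assign] at hm <;> (try split_ifs at hm) <;> simp_all

lemma not_mem_matchingOf_g4 : (r, .g4 j) ∉ M* := by
  rw [mem_matchingOf]
  cases r <;> simp only [assign] <;> (try split_ifs) <;> simp_all

lemma occ_mem_matchingOf (hc : Consistent m₂ v pol occ kIdx) (hσ : σ i = false)
    (hk : (k : ℕ) < 2) : (.c (occ i k).1 (occ i k).2, .x i k) ∈ M* := by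
  have hlit := hc.litVal_occ σ i k
  simp_all [assign, hc.occ_isLitPos, hc.v_occ, hc.kIdx_occ]

lemma z_mem_matchingOf : (.z j, .g2 j) ∈ M* := by simp [assign]

lemma exists_mem_matchingOf_a_zero (hσ : Satisfies m₂ v pol σ)
    (hslot : (j : ℕ) < m₂ ∨ litVal v pol σ j 2 = false) : ∃ r, (r, .a j 0) ∈ M* := by
  obtain ⟨l, hl, hlit⟩ := hσ j
  have hlits : litVal v pol σ j 0 = true ∨ litVal v pol σ j 1 = true := by
    rcases isLitPos_iff.1 hl with hl | ⟨rfl, hj⟩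
    · obtain rfl | rfl : l = 0 ∨ l = 1 := by omega
      exacts [.inl hlit, .inr hlit]
    · simp_all
  refine ⟨.c j (if litVal v pol σ j 0 then 0 else 1), ?_⟩
  cases h0 : litVal v pol σ j 0 <;> simp_all [assign, isLitPos_iff]

lemma acceptable_of_mem_matchingOf (hc : Consistent m₂ v pol occ kIdx) (hm : (r, h) ∈ M*) :
    h ∈ prefRes12 m₂ v kIdx r ∧ r ∈ prefHos12 m₂ occ h := by
  rw [mem_matchingOf] at hm
  cases r with
  | e i t =>
    simp only [assign, Option.some.injEq] at hm
    split_ifs at hm <;> subst hm <;> fin_cases t <;> simp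
  | c j l =>
    simp only [assign] at hm
    split_ifs at hm with hl hlit hl2 <;> simp only [Option.some.injEq] at hm <;> subst hm <;>
      rw [prefRes12_c hl]
    · simp only [clauseHos, if_pos hl2, List.mem_cons, true_or, or_true, true_and]
      fin_cases l <;> simp_all
    · rcases isLitPos_iff.1 hl with hl | ⟨rfl, hj⟩
      · omega
      · simp [clauseHos, prefHos12_a_two hj]
    · simp [c_mem_prefHos12_x hc hl]
  | _ =>
    simp only [assign] at hm
    (try split_ifs at hm) <;> simp only [Option.some.injEq, reduceCtorEq] at hm <;> subst hm <;>
      simp_all [prefRes12, prefHos12]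

lemma card_assignedTo_matchingOf_le_one (hc : Consistent m₂ v pol occ kIdx)
    (hh : ∀ i, h ≠ .x i 2) : (assignedTo M* h).card ≤ 1 := by
  refine Finset.card_le_one.2 fun r₁ hr₁ r₂ hr₂ => ?_
  rw [mem_assignedTo] at hr₁ hr₂
  cases h with
  | b i t => rw [(mem_matchingOf_b hr₁).1, (mem_matchingOf_b hr₂).1]
  | x i k =>
    have hk : k ≠ 2 := fun hk => hh i (hk ▸ rfl)
    rcases mem_matchingOf_x hc hr₁ with ⟨rfl, -⟩ | ⟨hk', -⟩ <;>
      rcases mem_matchingOf_x hc hr₂ with ⟨rfl, -⟩ | ⟨hk'', -⟩ <;> simp_all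
  | a j t =>
    fin_cases t
    · rw [(mem_matchingOf_a_zero hr₁).1, (mem_matchingOf_a_zero hr₂).1]
    · rw [(mem_matchingOf_a_one hr₁).1, (mem_matchingOf_a_one hr₂).1]
    · rcases (mem_matchingOf_a_two hr₁).2 with ⟨rfl, h₁⟩ | ⟨rfl, h₁⟩ <;>
        rcases (mem_matchingOf_a_two hr₂).2 with ⟨rfl, h₂⟩ | ⟨rfl, h₂⟩ <;> simp_all
  | y j => exact absurd hr₁ not_mem_matchingOf_y
  | g2 j => rw [mem_matchingOf_g2 hr₁, mem_matchingOf_g2 hr₂]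
  | g4 j => exact absurd hr₁ not_mem_matchingOf_g4

lemma card_assignedTo_matchingOf_x_two_le (hc : Consistent m₂ v pol occ kIdx) :
    (assignedTo M* (.x i 2)).card ≤ 2 := by
  have hsub : assignedTo M* (.x i 2) ⊆
      if σ i then {.c (occ i 2).1 (occ i 2).2} else {.e i 0, .e i 1} := by
    intro r hr
    rw [mem_assignedTo] at hr
    rcases mem_matchingOf_x hc hr with ⟨rfl, hlit⟩ | ⟨-, hσ, rfl | rfl⟩ <;>
      simp_all [hc.litVal_occ]
  refine (Finset.card_le_card hsub).trans ?_
  split_ifs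
  · simp
  · exact Finset.card_le_two

lemma isMatching_matchingOf (hc : Consistent m₂ v pol occ kIdx) : IsMatching I' M* := by
  refine ⟨fun p hp => acceptable_of_mem_matchingOf hc hp, fun r h h' hh hh' => ?_, fun h => ?_⟩
  · rw [mem_matchingOf] at hh hh'
    exact Option.some.inj (hh.symm.trans hh')
  · by_cases hx : ∃ i, h = .x i 2
    · obtain ⟨i, rfl⟩ := hx
      exact card_assignedTo_matchingOf_x_two_le hc
    · push Not at hx
      rw [q_eq_one hx]
      exact card_assignedTo_matchingOf_le_one hc hx

lemma feasibleCaps_matchingOf (hc : Consistent m₂ v pol occ kIdx) : FeasibleCaps I' M* := by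
  intro E hE
  change (assignedIn M* E).card ≤ 1
  rcases hE with ⟨i, rfl | rfl⟩ | ⟨j, ⟨hj, rfl⟩ | ⟨hj, rfl | rfl⟩ | rfl⟩ <;>
    refine card_assignedIn_pair_le_one (card_assignedTo_matchingOf_le_one hc (by simp))
      (card_assignedTo_matchingOf_le_one hc (by simp)) ?_
  case inl.inl | inl.inr =>
    cases hσ : σ i
    · exact .inl fun r hr => by simp [(mem_matchingOf_b hr).2] at hσ
    · refine .inr fun r hr => ?_
      rcases mem_matchingOf_x hc hr with ⟨-, hlit⟩ | ⟨hk, -⟩ <;> simp_all [hc.litVal_occ]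
  case inr.inr.inl.inl =>
    cases hlit : litVal v pol σ j 2
    · exact .inr fun r hr => by simp [(mem_matchingOf_a_one hr).2.2] at hlit
    · exact .inl fun r hr => by simpa [hj, hlit] using (mem_matchingOf_a_zero hr).2.1
  all_goals exact .inr fun r hr => by first
    | exact not_mem_matchingOf_y hr
    | exact not_mem_matchingOf_g4 hr

lemma not_isSBP_matchingOf_b (hc : Consistent m₂ v pol occ kIdx) (hσ : σ i = false)
    (hr : r ≠ .c (occ i t.castSucc).1 (occ i t.castSucc).2) : ¬ IsSBP I' M* r (.b i t) :=
  not_isSBP_of_rival_of_vacant (b_x_mem_regions12 i t) (by simp) (by simp)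
    (occ_mem_matchingOf hc hσ t.isLt) hr.symm
    fun r' hr' => by simp [(mem_matchingOf_b hr').2] at hσ

lemma not_isSBP_matchingOf_x (hc : Consistent m₂ v pol occ kIdx) (hσ : σ i = true)
    (hr : r ≠ .e i t) : ¬ IsSBP I' M* r (.x i t.castSucc) :=
  not_isSBP_of_rival_of_vacant (h' := .b i t) (b_x_mem_regions12 i t) (by simp) (by simp)
    (by simp [assign, hσ]) hr.symm fun r' hr' => by
      rcases mem_matchingOf_x hc hr' with ⟨-, hlit⟩ | ⟨hk, -⟩
      · simp [hc.litVal_occ, hσ] at hlit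
        omega
      · fin_cases t <;> simp at hk

lemma not_isSBP_matchingOf_g2 (hr : r = .g1 j ∨ r = .g3 j) : ¬ IsSBP I' M* r (.g2 j) := by
  refine not_isSBP_of_full ?_ fun r' hr' => ?_
  · rw [q_eq_one (by simp)]
    exact Finset.card_pos.2 ⟨.z j, mem_assignedTo.2 z_mem_matchingOf⟩
  · rw [mem_matchingOf_g2 (mem_assignedTo.1 hr')]
    rcases hr with rfl | rfl <;> simp [prefHos12, ListPref]

lemma not_isSBP_matchingOf_g4 (hr : r ≠ .z j) : ¬ IsSBP I' M* r (.g4 j) :=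
  not_isSBP_of_rival_of_vacant (g_mem_regions12 (j := j)) (by simp) (by simp)
    z_mem_matchingOf hr.symm fun _ => not_mem_matchingOf_g4

lemma not_isSBP_matchingOf_e (hc : Consistent m₂ v pol occ kIdx)
    (hh : h ∈ prefRes12 m₂ v kIdx (.e i t)) : ¬ IsSBP I' M* (.e i t) h := by
  have he : (.e i t, if σ i then .b i t else .x i 2) ∈ M* := by simp [assign]
  simp only [prefRes12_e, List.mem_cons, List.not_mem_nil, or_false] at hh
  cases hσ : σ i <;> simp only [hσ, Bool.false_eq_true, ↓reduceIte] at he <;>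
    rcases hh with rfl | rfl
  · exact not_isSBP_matchingOf_b hc hσ (by simp)
  · exact not_isSBP_of_mem he
  · exact not_isSBP_of_mem he
  · exact not_isSBP_of_assigned (isMatching_matchingOf hc) he (by simp [ListPref])

lemma not_isSBP_matchingOf_c_x (hc : Consistent m₂ v pol occ kIdx) (hl : IsLitPos m₂ j l) :
    ¬ IsSBP I' M* (.c j l) (.x (v j l) (kIdx j l)) := by
  cases hlit : litVal v pol σ j l
  · exact not_isSBP_of_mem (by simp [assign, hl, hlit])
  have hσ := hc.litVal_eq σ hl
  rw [hlit] at hσ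
  by_cases hk : (kIdx j l : ℕ) < 2
  · rw [show kIdx j l = (⟨kIdx j l, hk⟩ : Fin 2).castSucc from rfl]
    exact not_isSBP_matchingOf_x hc (by simp_all) (by simp)
  -- a negative occurrence: `x (v j l) 2` is full with `e (v j l) 0` and `e (v j l) 1`
  have hocc := hc.occ_kIdx j l hl
  obtain hk2 : kIdx j l = 2 := by omega
  rw [hk2] at hocc hσ ⊢
  have hσ' : σ (v j l) = false := by simpa using hσ.symm
  refine not_isSBP_of_full ?_ fun r' hr' => ?_
  · have hsub : {.e (v j l) 0, .e (v j l) 1} ⊆ assignedTo M* (.x (v j l) 2) := by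
      intro r hr
      simp only [Finset.mem_insert, Finset.mem_singleton] at hr
      rcases hr with rfl | rfl <;> simp [assign, hσ']
    simpa using Finset.card_le_card hsub
  · rw [mem_assignedTo] at hr'
    rcases mem_matchingOf_x hc hr' with ⟨-, hlit'⟩ | ⟨-, -, rfl | rfl⟩
    · simp [hocc, hlit] at hlit'
    all_goals simp [ListPref, hocc]

lemma not_isSBP_matchingOf_c_clauseHos (hc : Consistent m₂ v pol occ kIdx)
    (hl : IsLitPos m₂ j l) : ¬ IsSBP I' M* (.c j l) (clauseHos j l) := by
  cases hlit : litVal v pol σ j l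
  · refine not_isSBP_of_assigned (isMatching_matchingOf hc) (h₀ := .x (v j l) (kIdx j l))
      (by simp [assign, hl, hlit]) ?_
    simp [prefRes12_c hl, ListPref, clauseHos]
  rcases isLitPos_iff.1 hl with hl2 | ⟨rfl, hj⟩
  swap
  · exact not_isSBP_of_mem (by simp [assign, hl, hlit, clauseHos])
  simp only [clauseHos, if_pos hl2]
  by_cases hslot : (j : ℕ) < m₂ ∨ litVal v pol σ j 2 = false
  swap
  · rw [not_or, Bool.not_eq_false] at hslot
    refine not_isSBP_of_rival_of_vacant (r' := .d j) (h' := .a j 1)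
      (.inr ⟨j, .inr (.inl ⟨hslot.1, .inl rfl⟩)⟩) (by simp) (by simp) (by simp [assign, hslot])
      (by simp) fun r hr => ?_
    have := (mem_matchingOf_a_zero hr).2.1
    simp_all
    omega
  by_cases hfirst : (l : ℕ) = 0 ∨ litVal v pol σ j 0 = false
  · exact not_isSBP_of_mem (mem_matchingOf.2 (by
      simp only [assign]; rw [if_pos hl, if_pos hlit, if_pos hl2, if_pos ⟨hslot, hfirst⟩]))
  rw [not_or, Bool.not_eq_false] at hfirst
  obtain rfl : l = 1 := by omega
  refine not_isSBP_of_full ?_ fun r' hr' => ?_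
  · rw [q_eq_one (by simp)]
    exact Finset.card_pos.2 ⟨.c j 0, by simp [assign, hfirst.2, hslot, isLitPos_iff]⟩
  · rw [mem_assignedTo] at hr'
    rw [(mem_matchingOf_a_zero hr').1]
    simp [hfirst.2, ListPref]

lemma not_isSBP_matchingOf_d (hc : Consistent m₂ v pol occ kIdx) (hσ : Satisfies m₂ v pol σ)
    (hh : h ∈ prefRes12 m₂ v kIdx (.d j)) : ¬ IsSBP I' M* (.d j) h := by
  have hj : ¬ (j : ℕ) < m₂ := fun hj => by simp [prefRes12, hj] at hh
  have hd : (.d j, if litVal v pol σ j 2 then .a j 1 else .a j 2) ∈ M* := by simp [assign, hj]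
  simp only [prefRes12_d hj, List.mem_cons, List.not_mem_nil, or_false] at hh
  cases hlit : litVal v pol σ j 2 <;> simp only [hlit, Bool.false_eq_true, ↓reduceIte] at hd <;>
    rcases hh with rfl | rfl
  · obtain ⟨r, hr⟩ := exists_mem_matchingOf_a_zero hσ (.inr hlit)
    exact not_isSBP_of_rival_of_vacant (.inr ⟨j, .inr (.inl ⟨hj, .inl rfl⟩)⟩) (by simp) (by simp)
      hr (by rintro rfl; simpa using (mem_matchingOf_a_zero hr).1)
      fun r' hr' => by simp [(mem_matchingOf_a_one hr').2.2] at hlit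
  · exact not_isSBP_of_mem hd
  · exact not_isSBP_of_mem hd
  · exact not_isSBP_of_assigned (isMatching_matchingOf hc) hd (by simp [prefRes12_d hj, ListPref])

lemma not_isSBP_matchingOf_z_y (hσ : Satisfies m₂ v pol σ) : ¬ IsSBP I' M* (.z j) (.y j) := by
  by_cases hj : (j : ℕ) < m₂
  · obtain ⟨r, hr⟩ := exists_mem_matchingOf_a_zero hσ (.inl hj)
    exact not_isSBP_of_rival_of_vacant (.inr ⟨j, .inl ⟨hj, rfl⟩⟩) (by simp) (by simp) hr
      (by rintro rfl; simpa using (mem_matchingOf_a_zero hr).1) fun _ => not_mem_matchingOf_y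
  · have hr : (if litVal v pol σ j 2 then .c j 2 else .d j, .a j 2) ∈ M* := by
      cases hlit : litVal v pol σ j 2 <;> simp [assign, hj, hlit, isLitPos_iff]
    exact not_isSBP_of_rival_of_vacant (.inr ⟨j, .inr (.inl ⟨hj, .inr rfl⟩)⟩) (by simp)
      (by simp) hr (by split_ifs <;> simp) fun _ => not_mem_matchingOf_y

lemma not_isSBP_matchingOf (hc : Consistent m₂ v pol occ kIdx) (hσ : Satisfies m₂ v pol σ)
    (r : Res12 n m) (h : Hos12 n m) : ¬ IsSBP I' M* r h := by
  intro hs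
  have hh : h ∈ prefRes12 m₂ v kIdx r := hs.mem_prefR
  revert hs
  cases r with
  | e i t => exact not_isSBP_matchingOf_e hc hh
  | c j l =>
    have hl := isLitPos_of_mem_prefRes12 hh
    simp only [prefRes12_c hl, List.mem_cons, List.not_mem_nil, or_false] at hh
    rcases hh with rfl | rfl
    exacts [not_isSBP_matchingOf_c_x hc hl, not_isSBP_matchingOf_c_clauseHos hc hl]
  | d j => exact not_isSBP_matchingOf_d hc hσ hh
  | g1 j =>
    simp only [prefRes12, List.mem_cons, List.not_mem_nil, or_false] at hh
    rcases hh with rfl | rfl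
    exacts [not_isSBP_matchingOf_g2 (.inl rfl), not_isSBP_matchingOf_g4 (by simp)]
  | g3 j =>
    simp only [prefRes12, List.mem_cons, List.not_mem_nil, or_false] at hh
    rcases hh with rfl | rfl
    exacts [not_isSBP_matchingOf_g4 (by simp), not_isSBP_matchingOf_g2 (.inr rfl)]
  | z j =>
    simp only [prefRes12, List.mem_cons, List.not_mem_nil, or_false] at hh
    rcases hh with rfl | rfl
    exacts [not_isSBP_matchingOf_z_y hσ, not_isSBP_of_mem z_mem_matchingOf]

theorem isStronglyStable_matchingOf (hc : Consistent m₂ v pol occ kIdx)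
    (hσ : Satisfies m₂ v pol σ) : IsStronglyStable I' M* :=
  ⟨isMatching_matchingOf hc, feasibleCaps_matchingOf hc, not_isSBP_matchingOf hc hσ⟩

end Backward

section Forward

local notation "I'" => ppnInstance232 m₂ v occ kIdx

variable {M : Finset (Res12 n m × Hos12 n m)}

lemma feasibleCaps_move_g (hF : FeasibleCaps I' M) (hh : h = .g2 j ∨ h = .g4 j)
    (hr : ∀ r' h', (h' = .g2 j ∨ h' = .g4 j) → (r', h') ∈ M → r' = r) :
    FeasibleCaps I' (move M r h) :=
  feasibleCaps_move hF (fun _ _ => le_rfl) fun E hE hhE r' hr' => by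
    obtain ⟨h', hh', hr'⟩ := mem_assignedIn.1 hr'
    rw [eq_of_g_mem_regions12 (j := j) hE (by rcases hh with rfl | rfl <;> simp [hhE]),
      Finset.mem_insert, Finset.mem_singleton] at hh'
    exact hr r' h' hh' hr'

lemma eq_g1_or_eq_g3 (hM : IsMatching I' M) (hz : (.z j, .g2 j) ∉ M) {h' : Hos12 n m}
    (hh' : h' = .g2 j ∨ h' = .g4 j) (hr : (r, h') ∈ M) : r = .g1 j ∨ r = .g3 j := by
  have := hM.mem_prefH hr
  rcases hh' with rfl | rfl <;> simp only [prefH_ppnInstance232, prefHos12, List.mem_cons,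
    List.not_mem_nil, or_false] at this
  · rcases this with rfl | rfl | rfl
    exacts [(hz hr).elim, .inr rfl, .inl rfl]
  · exact this

lemma eq_of_mem_g (hF : FeasibleCaps I' M) {r₁ r₂ : Res12 n m} {h₁ h₂ : Hos12 n m}
    (hh₁ : h₁ = .g2 j ∨ h₁ = .g4 j) (hh₂ : h₂ = .g2 j ∨ h₂ = .g4 j) (hr₁ : (r₁, h₁) ∈ M)
    (hr₂ : (r₂, h₂) ∈ M) : r₁ = r₂ :=
  hF.eq_of_mem (g_mem_regions12 (j := j)) le_rfl (by rcases hh₁ with rfl | rfl <;> simp)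
    (by rcases hh₂ with rfl | rfl <;> simp) hr₁ hr₂

lemma g_acceptable (hr : r = .g1 j ∨ r = .g3 j) (hh : h = .g2 j ∨ h = .g4 j) :
    h ∈ (I').prefR r ∧ r ∈ (I').prefH h := by
  rcases hr with rfl | rfl <;> rcases hh with rfl | rfl <;> simp [prefRes12, prefHos12]

lemma not_feasibleCaps_move_of_vacant (hM : IsStronglyStable I' M) (hd : Desires I' M r h)
    (hvac : ∀ r', (r', h) ∉ M) : ¬ FeasibleCaps I' (move M r h) :=
  hM.not_feasibleCaps_move hd (card_assignedTo_lt_of_vacant hvac q_pos)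

lemma exists_rival_of_vacant (hM : IsStronglyStable I' M) (hd : Desires I' M r h)
    (hvac : ∀ r', (r', h) ∉ M) {h'' : Hos12 n m}
    (hreg : ∀ E ∈ regions12 m₂, h ∈ E → E = {h'', h}) : ∃ r', (r', h'') ∈ M ∧ r' ≠ r := by
  by_contra! hne
  refine not_feasibleCaps_move_of_vacant hM hd hvac
    (feasibleCaps_move hM.2.1 (fun _ _ => le_rfl) fun E hE hhE r' hr' => ?_)
  obtain ⟨h', hh', hr'⟩ := mem_assignedIn.1 hr'
  rw [hreg E hE hhE, Finset.mem_insert, Finset.mem_singleton] at hh'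
  rcases hh' with rfl | rfl
  exacts [hne r' hr', (hvac r' hr').elim]

lemma z_mem_of_isStronglyStable (hM : IsStronglyStable I' M) (j : Fin m) :
    (.z j, .g2 j) ∈ M := by
  by_contra hz
  -- each of the five ways `g1 j`, `g3 j` can occupy the region `{g2 j, g4 j}` is blocked strongly
  by_cases h32 : (.g3 j, .g2 j) ∈ M
  · refine not_feasibleCaps_move_of_vacant hM (desires_of_listPref hM.1
      (g_acceptable (.inr rfl) (.inr rfl)) h32 (by simp [prefRes12, ListPref])) (fun r' hr' => ?_)
      (feasibleCaps_move_g hM.2.1 (.inr rfl) fun r' h' hh' hr' =>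
        eq_of_mem_g hM.2.1 hh' (.inl rfl) hr' h32)
    obtain rfl := eq_of_mem_g hM.2.1 (.inr rfl) (.inl rfl) hr' h32
    simpa using hM.1.eq_of_mem hr' h32
  by_cases h12 : (.g1 j, .g2 j) ∈ M
  · have hun3 : ∀ h', (.g3 j, h') ∉ M := fun h' hr => by
      have hh' : h' = .g4 j ∨ h' = .g2 j := by simpa [prefRes12] using hM.1.mem_prefR hr
      simpa using eq_of_mem_g hM.2.1 hh'.symm (.inl rfl) hr h12
    exact hM.not_listPref (desires_of_unassigned (g_acceptable (.inr rfl) (.inl rfl)) hun3) h12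
      (by simp [prefHos12, ListPref])
  have hvac2 : ∀ r, (r, .g2 j) ∉ M := fun r hr => by
    rcases eq_g1_or_eq_g3 hM.1 hz (.inl rfl) hr with rfl | rfl
    exacts [h12 hr, h32 hr]
  by_cases h14 : (.g1 j, .g4 j) ∈ M
  · exact not_feasibleCaps_move_of_vacant hM (desires_of_listPref hM.1
      (g_acceptable (.inl rfl) (.inl rfl)) h14 (by simp [prefRes12, ListPref])) hvac2
      (feasibleCaps_move_g hM.2.1 (.inl rfl) fun r' h' hh' hr' =>
        eq_of_mem_g hM.2.1 hh' (.inr rfl) hr' h14)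
  have hun1 : ∀ h', (.g1 j, h') ∉ M := fun h' hr => by
    rcases (by simpa [prefRes12] using hM.1.mem_prefR hr : h' = .g2 j ∨ h' = .g4 j) with rfl | rfl
    exacts [h12 hr, h14 hr]
  by_cases h34 : (.g3 j, .g4 j) ∈ M
  · exact hM.not_listPref (desires_of_unassigned (g_acceptable (.inl rfl) (.inr rfl)) hun1) h34
      (by simp [prefHos12, ListPref])
  refine not_feasibleCaps_move_of_vacant hM
    (desires_of_unassigned (g_acceptable (.inl rfl) (.inl rfl)) hun1) hvac2
    (feasibleCaps_move_g hM.2.1 (.inl rfl) fun r' h' hh' hr' => ?_)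
  rcases eq_g1_or_eq_g3 hM.1 hz hh' hr' with rfl | rfl
  · exact (hun1 _ hr').elim
  · rcases hh' with rfl | rfl
    exacts [(h32 hr').elim, (h34 hr').elim]

lemma exists_mem_clauseHos_of_a_zero (hM : IsMatching I' M) (hr : (r, .a j 0) ∈ M) :
    ∃ l, IsLitPos m₂ j l ∧ (.c j l, clauseHos j l) ∈ M := by
  have := hM.mem_prefH hr
  simp only [prefH_ppnInstance232, prefHos12_a_zero, List.mem_cons, List.not_mem_nil,
    or_false] at this
  rcases this with rfl | rfl
  exacts [⟨0, by simp [isLitPos_iff], by simpa [clauseHos] using hr⟩,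
    ⟨1, by simp [isLitPos_iff], by simpa [clauseHos] using hr⟩]

lemma exists_mem_clauseHos (hM : IsStronglyStable I' M) (j : Fin m) :
    ∃ l, IsLitPos m₂ j l ∧ (.c j l, clauseHos j l) ∈ M := by
  have hz := z_mem_of_isStronglyStable hM j
  have hvac_y : ∀ r, (r, .y j) ∉ M := fun r hr => by
    have := hM.1.mem_prefH hr
    simp only [prefH_ppnInstance232, prefHos12, List.mem_singleton] at this
    subst this
    simpa using hM.1.eq_of_mem hr hz
  obtain ⟨r, hr, -⟩ := exists_rival_of_vacant hM
    (desires_of_listPref hM.1 (by simp [prefRes12, prefHos12]) hz (by simp [prefRes12, ListPref]))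
    hvac_y fun _ => eq_of_y_mem_regions12
  by_cases hj : (j : ℕ) < m₂
  · rw [if_pos hj] at hr
    exact exists_mem_clauseHos_of_a_zero hM.1 hr
  rw [if_neg hj] at hr
  have := hM.1.mem_prefH hr
  simp only [prefH_ppnInstance232, prefHos12_a_two hj, List.mem_cons, List.not_mem_nil,
    or_false] at this
  rcases this with rfl | rfl
  · have hvac_a1 : ∀ r, (r, .a j 1) ∉ M := fun r hr' => by
      have := hM.1.mem_prefH hr'
      simp only [prefH_ppnInstance232, prefHos12_a_one hj, List.mem_singleton] at this
      subst this
      simpa using hM.1.eq_of_mem hr' hr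
    obtain ⟨r', hr', -⟩ := exists_rival_of_vacant hM
      (desires_of_listPref hM.1 (by simp [prefRes12_d hj, prefHos12_a_one hj]) hr
        (by simp [prefRes12_d hj, ListPref]))
      hvac_a1 fun _ => eq_of_a_one_mem_regions12
    exact exists_mem_clauseHos_of_a_zero hM.1 hr'
  · exact ⟨2, by simp [isLitPos_iff, hj], by simpa [clauseHos] using hr⟩

variable (M) in
def assignmentOf (i : Fin n) : Bool := decide (∃ t : Fin 2, (.e i t, .b i t) ∈ M)

lemma desires_x_of_mem_clauseHos (hc : Consistent m₂ v pol occ kIdx) (hM : IsMatching I' M)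
    (hl : IsLitPos m₂ j l) (hm : (.c j l, clauseHos j l) ∈ M) :
    Desires I' M (.c j l) (.x (v j l) (kIdx j l)) :=
  desires_of_listPref hM ⟨by simp [prefRes12_c hl], c_mem_prefHos12_x hc hl⟩ hm
    (by simp [prefRes12_c hl, ListPref, clauseHos])

lemma assignmentOf_eq_true (hc : Consistent m₂ v pol occ kIdx) (hM : IsStronglyStable I' M)
    (hl : IsLitPos m₂ j l) (hm : (.c j l, clauseHos j l) ∈ M) (hk : (kIdx j l : ℕ) < 2) :
    assignmentOf M (v j l) = true := by
  have hd := desires_x_of_mem_clauseHos hc hM.1 hl hm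
  -- `x (v j l) (kIdx j l)` accepts only `c j l`, so its region must hold `e (v j l) _`
  have hvac : ∀ r', (r', .x (v j l) (kIdx j l)) ∉ M := fun r' hr' => by
    have := hM.1.mem_prefH hr'
    simp [prefHos12_x_of_lt hk, hc.occ_kIdx j l hl] at this
    exact hd.1 (this ▸ hr')
  obtain ⟨r', hr', -⟩ := exists_rival_of_vacant hM hd hvac fun _ => eq_of_x_mem_regions12 hk
  have := hM.1.mem_prefH hr'
  simp only [prefH_ppnInstance232, prefHos12_b, List.mem_singleton] at this
  subst this
  exact decide_eq_true ⟨_, hr'⟩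

lemma assignmentOf_eq_false (hc : Consistent m₂ v pol occ kIdx) (hM : IsStronglyStable I' M)
    (hl : IsLitPos m₂ j l) (hm : (.c j l, clauseHos j l) ∈ M) (hk : kIdx j l = 2) :
    assignmentOf M (v j l) = false := by
  have hd := desires_x_of_mem_clauseHos hc hM.1 hl hm
  have hocc := hc.occ_kIdx j l hl
  rw [hk] at hd hocc
  -- `x (v j l) 2` lies in no region, so it must be full with `e (v j l) 0` and `e (v j l) 1`
  have hfull := hM.le_card_assignedTo hd (feasibleCaps_move hM.2.1 (fun _ _ => le_rfl)
    fun E hE hx => (x_two_not_mem_regions12 hE hx).elim)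
  have hsub : assignedTo M (.x (v j l) 2) ⊆ {.e (v j l) 0, .e (v j l) 1} := fun r hr => by
    rw [mem_assignedTo] at hr
    have := hM.1.mem_prefH hr
    simp only [prefH_ppnInstance232, prefHos12_x_two, hocc, List.mem_cons, List.not_mem_nil,
      or_false] at this
    rcases this with rfl | rfl | rfl
    exacts [by simp, by simp, (hd.1 hr).elim]
  have heq := Finset.eq_of_subset_of_card_le hsub (by simpa using hfull)
  have hx (t : Fin 2) : (.e (v j l) t, .x (v j l) 2) ∈ M := by
    rw [← mem_assignedTo, heq]
    fin_cases t <;> simp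
  simp only [assignmentOf, decide_eq_false_iff_not, not_exists]
  exact fun t hb => by simpa using hM.1.eq_of_mem hb (hx t)

lemma litVal_assignmentOf (hc : Consistent m₂ v pol occ kIdx) (hM : IsStronglyStable I' M)
    (hl : IsLitPos m₂ j l) (hm : (.c j l, clauseHos j l) ∈ M) :
    litVal v pol (assignmentOf M) j l = true := by
  rw [hc.litVal_eq _ hl]
  split_ifs with hk
  · exact assignmentOf_eq_true hc hM hl hm hk
  · simpa using assignmentOf_eq_false hc hM hl hm (by omega)

theorem satisfies_assignmentOf (hc : Consistent m₂ v pol occ kIdx)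
    (hM : IsStronglyStable I' M) : Satisfies m₂ v pol (assignmentOf M) := fun j => by
  obtain ⟨l, hl, hm⟩ := exists_mem_clauseHos hM j
  exact ⟨l, hl, litVal_assignmentOf hc hM hl hm⟩

end Forward

end PPNReduction

theorem ppn232_reduction_correct_general {n m m₂ : ℕ}
    (v : Fin m → Fin 3 → Fin n) (pol : Fin m → Fin 3 → Bool)
    (occ : Fin n → Fin 3 → Fin m × Fin 3) (kIdx : Fin m → Fin 3 → Fin 3)
    (hoccValid : ∀ i k, ((occ i k).2 : ℕ) < (if ((occ i k).1 : ℕ) < m₂ then 2 else 3))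
    (hoccVar : ∀ i k, v (occ i k).1 (occ i k).2 = i)
    (hoccPol : ∀ i k, pol (occ i k).1 (occ i k).2 = decide ((k : ℕ) < 2))
    (hoccInj : ∀ i, Function.Injective (occ i))
    (hkIdx : ∀ (j : Fin m) (l : Fin 3), (l : ℕ) < (if (j : ℕ) < m₂ then 2 else 3) →
      occ (v j l) (kIdx j l) = (j, l)) :
    (∃ M : Finset (Res12 n m × Hos12 n m),
        (ppnInstance232 m₂ v occ kIdx).IsStronglyStable M) ↔
    (∃ a : Fin n → Bool, ∀ j : Fin m, ∃ l : Fin 3,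
        (l : ℕ) < (if (j : ℕ) < m₂ then 2 else 3) ∧
        (if pol j l then a (v j l) else !(a (v j l))) = true) := by
  have hc : PPNReduction.Consistent m₂ v pol occ kIdx :=
    ⟨hoccValid, hoccVar, hoccPol, hoccInj, hkIdx⟩
  constructor
  · rintro ⟨M, hM⟩
    exact ⟨PPNReduction.assignmentOf M, PPNReduction.satisfies_assignmentOf hc hM⟩
  · rintro ⟨σ, hσ⟩
    exact ⟨PPNReduction.matchingOf m₂ v pol kIdx σ,
      PPNReduction.isStronglyStable_matchingOf hc hσ⟩

/-- `I'` admits a strongly stable matching iff the PPN-3-SAT instance `I` is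
satisfiable. -/
theorem ppn232_reduction_correct {n m m₂ : ℕ} (hm₂ : m₂ ≤ m)
    (v : Fin m → Fin 3 → Fin n) (pol : Fin m → Fin 3 → Bool)
    (occ : Fin n → Fin 3 → Fin m × Fin 3) (kIdx : Fin m → Fin 3 → Fin 3)
    (hoccValid : ∀ i k, ((occ i k).2 : ℕ) < (if ((occ i k).1 : ℕ) < m₂ then 2 else 3))
    (hoccVar : ∀ i k, v (occ i k).1 (occ i k).2 = i)
    (hoccPol : ∀ i k, pol (occ i k).1 (occ i k).2 = decide ((k : ℕ) < 2))
    (hoccInj : ∀ i, Function.Injective (occ i))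
    (hkIdx : ∀ (j : Fin m) (l : Fin 3), (l : ℕ) < (if (j : ℕ) < m₂ then 2 else 3) →
      occ (v j l) (kIdx j l) = (j, l)) :
    (∃ M : Finset (Res12 n m × Hos12 n m),
        (ppnInstance232 m₂ v occ kIdx).IsStronglyStable M) ↔
    (∃ a : Fin n → Bool, ∀ j : Fin m, ∃ l : Fin 3,
        (l : ℕ) < (if (j : ℕ) < m₂ then 2 else 3) ∧
        (if pol j l then a (v j l) else !(a (v j l))) = true) :=
  ppn232_reduction_correct_general v pol occ kIdx hoccValid hoccVar hoccPol hoccInj hkIdx
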